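/- arXiv:1105.2958 — 3 statements merged into one kernel-verified Lean document; each statement's English description precedes it below -/
import Mathlib

section
/- Let d ≥ 1 be an integer, α ∈ (0,2), and let 0 < c₁ ≤ c₂. Suppose p : (0,∞) × ℝ^d × ℝ^d → ℝ is measurable in its last variable and satisfies c₁·min(t^(−d/α), t/|x−y|^(d+α)) ≤ p(t,x,y) ≤ c₂·min(t^(−d/α), t/|x−y|^(d+α)) for all t > 0 and x, y ∈ ℝ^d. Then there is a constant C > 0 (depending only on d, α, c₁, c₂) such that for every t > 0, every x, y ∈ ℝ^d, and every bounded measurable f : ℝ^d → [0,∞), ∫_{ℝ^d} f(z)·p(t,x,z) dz ≤ C·(1 + |x−y|/t^(1/α))^(d+α) · ∫_{ℝ^d} f(z)·p(t,y,z) dz. -/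
open Real MeasureTheory

/-!
With `s = t ^ (1 / α)`, the two-sided bound says that `p t x z` is comparable, with constants
`c₁` and `c₂`, to `t / max s ‖x - z‖ ^ (d + α)`; the lower bound fails only at `z = x`, where
`t / 0 = 0`, a null set. The triangle inequality gives
`max s ‖y - z‖ ≤ (1 + ‖x - y‖ / s) * max s ‖x - z‖`, hence
`p t x z ≤ c₂ / c₁ * (1 + ‖x - y‖ / s) ^ (d + α) * p t y z` for almost every `z`, and the
Harnack inequality follows by integrating against `f`.
-/

section StableProfile

variable {d α t : ℝ}

lemma rpow_neg_div_eq_div_rpow_one_div (ht : 0 < t) (hα : α ≠ 0) :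
    t ^ (-d / α) = t / (t ^ (1 / α)) ^ (d + α) := by
  rw [← rpow_mul ht.le, eq_div_iff (rpow_pos_of_pos ht _).ne', ← rpow_add ht]
  rw [show -d / α + 1 / α * (d + α) = 1 by field_simp; ring, rpow_one]

lemma min_le_div_max_rpow (ht : 0 < t) (hα : α ≠ 0) (r : ℝ) :
    min (t ^ (-d / α)) (t / r ^ (d + α)) ≤ t / max (t ^ (1 / α)) r ^ (d + α) := by
  rcases max_choice (t ^ (1 / α)) r with h | h <;> rw [h]
  · exact (min_le_left _ _).trans_eq (rpow_neg_div_eq_div_rpow_one_div ht hα)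
  · exact min_le_right _ _

lemma div_max_rpow_le_min (ht : 0 < t) (hα : α ≠ 0) (hdα : 0 ≤ d + α) {r : ℝ} (hr : 0 < r) :
    t / max (t ^ (1 / α)) r ^ (d + α) ≤ min (t ^ (-d / α)) (t / r ^ (d + α)) := by
  have hs : 0 < t ^ (1 / α) := rpow_pos_of_pos ht _
  rw [rpow_neg_div_eq_div_rpow_one_div ht hα]
  refine le_min ?_ ?_ <;> gcongr
  exacts [le_max_left _ _, le_max_right _ _]

end StableProfile

lemma max_norm_sub_le_mul_max {E : Type*} [SeminormedAddCommGroup E] {s : ℝ} (hs : 0 < s)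
    (x y z : E) : max s ‖y - z‖ ≤ (1 + ‖x - y‖ / s) * max s ‖x - z‖ := by
  have hxy : ‖x - y‖ = ‖x - y‖ / s * s := by field_simp
  have htri : ‖y - z‖ ≤ ‖x - z‖ + ‖x - y‖ := by
    simpa only [sub_sub_sub_cancel_left, norm_sub_rev y x] using norm_sub_le (x - z) (x - y)
  have hr : 0 ≤ ‖x - y‖ / s := by positivity
  have hs' : s ≤ max s ‖x - z‖ := le_max_left _ _
  have hxz : ‖x - z‖ ≤ max s ‖x - z‖ := le_max_right _ _
  apply max_le <;> nlinarith

lemma div_max_rpow_le_mul_div_max_rpow {E : Type*} [SeminormedAddCommGroup E] {s t k : ℝ}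
    (hs : 0 < s) (ht : 0 ≤ t) (hk : 0 ≤ k) (x y z : E) :
    t / max s ‖x - z‖ ^ k ≤ (1 + ‖x - y‖ / s) ^ k * (t / max s ‖y - z‖ ^ k) := by
  have hx : 0 < max s ‖x - z‖ := lt_max_of_lt_left hs
  have hy : 0 < max s ‖y - z‖ := lt_max_of_lt_left hs
  have hpow : max s ‖y - z‖ ^ k ≤ (1 + ‖x - y‖ / s) ^ k * max s ‖x - z‖ ^ k := by
    rw [← mul_rpow (by positivity) hx.le]
    exact rpow_le_rpow hy.le (max_norm_sub_le_mul_max hs x y z) hk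
  rw [mul_div_assoc', div_le_div_iff₀ (rpow_pos_of_pos hx _) (rpow_pos_of_pos hy _)]
  calc t * max s ‖y - z‖ ^ k ≤ t * ((1 + ‖x - y‖ / s) ^ k * max s ‖x - z‖ ^ k) := by gcongr
    _ = (1 + ‖x - y‖ / s) ^ k * t * max s ‖x - z‖ ^ k := by ring

lemma le_mul_of_stable_kernel_bounds {E : Type*} [NormedAddCommGroup E] {q : E → E → ℝ}
    {d α t c₁ c₂ : ℝ} (hα : 0 < α) (hdα : 0 ≤ d + α) (ht : 0 < t) (hc₁ : 0 < c₁) (hc₂ : 0 ≤ c₂)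
    (hlow : ∀ x y, c₁ * min (t ^ (-d / α)) (t / ‖x - y‖ ^ (d + α)) ≤ q x y)
    (hup : ∀ x y, q x y ≤ c₂ * min (t ^ (-d / α)) (t / ‖x - y‖ ^ (d + α)))
    {x y z : E} (hz : z ≠ y) :
    q x z ≤ c₂ / c₁ * (1 + ‖x - y‖ / t ^ (1 / α)) ^ (d + α) * q y z := by
  set B := (1 + ‖x - y‖ / t ^ (1 / α)) ^ (d + α)
  have hB : 0 ≤ B := by positivity
  have hyz : 0 < ‖y - z‖ := norm_pos_iff.2 (sub_ne_zero.2 hz.symm)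
  calc q x z ≤ c₂ * (t / max (t ^ (1 / α)) ‖x - z‖ ^ (d + α)) :=
        (hup x z).trans (by gcongr; exact min_le_div_max_rpow ht hα.ne' _)
    _ ≤ c₂ * (B * (t / max (t ^ (1 / α)) ‖y - z‖ ^ (d + α))) := by
        gcongr
        exact div_max_rpow_le_mul_div_max_rpow (rpow_pos_of_pos ht _) ht.le hdα x y z
    _ = c₂ / c₁ * B * (c₁ * (t / max (t ^ (1 / α)) ‖y - z‖ ^ (d + α))) := by
        field_simp
    _ ≤ c₂ / c₁ * B * q y z := by
        gcongr
        exact (mul_le_mul_of_nonneg_left (div_max_rpow_le_min ht hα.ne' hdα hyz) hc₁.le).trans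
          (hlow y z)

lemma integral_le_mul_integral_of_ae_le_mul {X : Type*} [MeasurableSpace X] {μ : Measure X}
    {f g : X → ℝ} {K K' : ℝ} (hf : 0 ≤ᵐ[μ] f) (hg : 0 ≤ᵐ[μ] g)
    (hgm : AEStronglyMeasurable g μ) (hfg : f ≤ᵐ[μ] fun z => K * g z)
    (hgf : g ≤ᵐ[μ] fun z => K' * f z) :
    ∫ z, f z ∂μ ≤ K * ∫ z, g z ∂μ := by
  by_cases hgi : Integrable g μ
  · rw [← integral_const_mul]
    exact integral_mono_of_nonneg hf (hgi.const_mul K) hfg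
  -- `g ≤ K' f` makes `f` non-integrable too, so both integrals are `0`.
  have hfi : ¬Integrable f μ := fun hfi => hgi <| (hfi.const_mul K').mono' hgm <| by
    filter_upwards [hg, hgf] with z hz hzf
    rwa [norm_of_nonneg hz]
  simp [integral_undef hfi, integral_undef hgi]

theorem stable_harnack_inequality
    (d : ℕ) (hd : 1 ≤ d) (α : ℝ) (hα : α ∈ Set.Ioo (0 : ℝ) 2)
    (c₁ c₂ : ℝ) (hc₁ : 0 < c₁) (hc₁₂ : c₁ ≤ c₂)
    (p : ℝ → EuclideanSpace ℝ (Fin d) → EuclideanSpace ℝ (Fin d) → ℝ)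
    (hmeas : ∀ t x, Measurable (p t x))
    (hlow : ∀ t > (0 : ℝ), ∀ x y,
      c₁ * min (t ^ (-(d : ℝ) / α)) (t / ‖x - y‖ ^ ((d : ℝ) + α)) ≤ p t x y)
    (hup : ∀ t > (0 : ℝ), ∀ x y,
      p t x y ≤ c₂ * min (t ^ (-(d : ℝ) / α)) (t / ‖x - y‖ ^ ((d : ℝ) + α))) :
    ∃ C > (0 : ℝ), ∀ t > (0 : ℝ), ∀ x y : EuclideanSpace ℝ (Fin d),
      ∀ f : EuclideanSpace ℝ (Fin d) → ℝ, Measurable f → (∀ z, 0 ≤ f z) →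
      (∃ M, ∀ z, f z ≤ M) →
      ∫ z, f z * p t x z ≤
        C * (1 + ‖x - y‖ / t ^ (1 / α)) ^ ((d : ℝ) + α) * ∫ z, f z * p t y z := by
  have : NeZero d := ⟨by omega⟩
  have hc₂ : 0 < c₂ := hc₁.trans_le hc₁₂
  have hdα : 0 ≤ (d : ℝ) + α := by linarith [hα.1, (d.cast_nonneg : (0 : ℝ) ≤ d)]
  refine ⟨c₂ / c₁, div_pos hc₂ hc₁, fun t ht x y f hf hf0 _ => ?_⟩
  have hp0 (u z) : 0 ≤ p t u z := (mul_nonneg hc₁.le (by positivity)).trans (hlow t ht u z)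
  have hcmp {u v : EuclideanSpace ℝ (Fin d)} :
      ∀ᵐ z, f z * p t u z ≤ c₂ / c₁ * (1 + ‖u - v‖ / t ^ (1 / α)) ^ ((d : ℝ) + α) *
        (f z * p t v z) := by
    filter_upwards [volume.ae_ne v] with z hz
    rw [mul_left_comm]
    exact mul_le_mul_of_nonneg_left (le_mul_of_stable_kernel_bounds hα.1 hdα ht hc₁ hc₂.le
      (hlow t ht) (hup t ht) hz) (hf0 z)
  exact integral_le_mul_integral_of_ae_le_mul (.of_forall fun z => mul_nonneg (hf0 z) (hp0 x z))
    (.of_forall fun z => mul_nonneg (hf0 z) (hp0 y z)) (hf.mul (hmeas t y)).aestronglyMeasurable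
    hcmp hcmp
end

section
/- Let d ≥ 1 be an integer, α ∈ (0,2), 0 < c₁ ≤ c₂, and p > 1. Suppose q : (0,∞) × ℝ^d × ℝ^d → ℝ is measurable in its last variable, satisfies c₁·min(t^(−d/α), t/|x−y|^(d+α)) ≤ q(t,x,y) ≤ c₂·min(t^(−d/α), t/|x−y|^(d+α)) for all t > 0 and x, y ∈ ℝ^d, and ∫_{ℝ^d} q(t,y,z) dz = 1 for every t > 0 and y ∈ ℝ^d. Then there is a constant C > 0 (depending only on d, α, c₁, c₂) such that for every t > 0, x, y ∈ ℝ^d, and every bounded measurable f : ℝ^d → [0,∞), (∫_{ℝ^d} f(z)·q(t,x,z) dz)^p ≤ C·(1 + |x−y|/t^(1/α))^(p(d+α)) · ∫_{ℝ^d} f(z)^p·q(t,y,z) dz. -/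
open Real MeasureTheory

/-- Key pointwise comparison of the stable-type kernels at two base points. -/
lemma stable_min_compare (D α t : ℝ) (hD : 0 ≤ D) (hα : 0 < α) (ht : 0 < t)
    (u v w : ℝ) (hu : 0 ≤ u) (hv : 0 < v) (hw : 0 ≤ w) (htri : v ≤ u + w) :
    min (t ^ (-D / α)) (t / u ^ (D + α)) ≤
      (1 + w / t ^ (1 / α)) ^ (D + α) * min (t ^ (-D / α)) (t / v ^ (D + α)) := by
  set s : ℝ := t ^ (1 / α) with hs_def
  have hs : 0 < s := Real.rpow_pos_of_pos ht _
  have hE : 0 < D + α := by linarith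
  have hsE : s ^ (D + α) = t ^ ((D + α) / α) := by
    rw [hs_def, ← Real.rpow_mul ht.le]
    congr 1; field_simp
  have hts : t ^ (-D / α) = t / s ^ (D + α) := by
    rw [hsE]
    rw [eq_div_iff (ne_of_gt (Real.rpow_pos_of_pos ht _)), ← Real.rpow_add ht]
    rw [show -D / α + (D + α) / α = 1 by field_simp; ring, Real.rpow_one]
  have hr0 : 0 ≤ w / s := div_nonneg hw hs.le
  have hB1 : (1 : ℝ) ≤ (1 + w / s) ^ (D + α) := by
    calc (1 : ℝ) = 1 ^ (D + α) := (Real.one_rpow _).symm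
      _ ≤ (1 + w / s) ^ (D + α) :=
        Real.rpow_le_rpow zero_le_one (by linarith) hE.le
  have hBnn : (0 : ℝ) ≤ (1 + w / s) ^ (D + α) := le_trans zero_le_one hB1
  rcases le_or_gt v s with hvs | hsv
  · -- v ≤ s : the right min equals t ^ (-D/α)
    have hminv : min (t ^ (-D / α)) (t / v ^ (D + α)) = t ^ (-D / α) := by
      apply min_eq_left
      rw [hts]
      apply div_le_div_of_nonneg_left ht.le (Real.rpow_pos_of_pos hv _)
      exact Real.rpow_le_rpow hv.le hvs hE.le
    rw [hminv]
    calc min (t ^ (-D / α)) (t / u ^ (D + α)) ≤ t ^ (-D / α) := min_le_left _ _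
      _ = 1 * t ^ (-D / α) := (one_mul _).symm
      _ ≤ (1 + w / s) ^ (D + α) * t ^ (-D / α) :=
        mul_le_mul_of_nonneg_right hB1 (Real.rpow_nonneg ht.le _)
  · -- s < v : the right min equals t / v ^ (D+α)
    have hminv : min (t ^ (-D / α)) (t / v ^ (D + α)) = t / v ^ (D + α) := by
      apply min_eq_right
      rw [hts]
      apply div_le_div_of_nonneg_left ht.le (Real.rpow_pos_of_pos hs _)
      exact Real.rpow_le_rpow hs.le hsv.le hE.le
    rw [hminv]
    have hmax : 0 < max u s := lt_of_lt_of_le hs (le_max_right _ _)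
    have h1 : min (t ^ (-D / α)) (t / u ^ (D + α)) ≤ t / (max u s) ^ (D + α) := by
      rcases le_total u s with h | h
      · rw [max_eq_right h, ← hts]; exact min_le_left _ _
      · rw [max_eq_left h]; exact min_le_right _ _
    have h2 : v ≤ max u s * (1 + w / s) := by
      have hws : w = w / s * s := by field_simp
      calc v ≤ u + w := htri
        _ ≤ max u s + w / s * max u s := by
            refine add_le_add (le_max_left _ _) ?_
            calc w = w / s * s := hws
              _ ≤ w / s * max u s :=
                mul_le_mul_of_nonneg_left (le_max_right _ _) hr0
        _ = max u s * (1 + w / s) := by ring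
    have h3 : v ^ (D + α) ≤ (max u s) ^ (D + α) * (1 + w / s) ^ (D + α) := by
      rw [← Real.mul_rpow hmax.le (by linarith)]
      exact Real.rpow_le_rpow hv.le h2 hE.le
    have h4 : t / (max u s) ^ (D + α) ≤ (1 + w / s) ^ (D + α) * (t / v ^ (D + α)) := by
      rw [mul_div_assoc', div_le_div_iff₀ (Real.rpow_pos_of_pos hmax _)
        (Real.rpow_pos_of_pos hv _)]
      calc t * v ^ (D + α) ≤ t * ((max u s) ^ (D + α) * (1 + w / s) ^ (D + α)) :=
          mul_le_mul_of_nonneg_left h3 ht.le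
        _ = (1 + w / s) ^ (D + α) * t * (max u s) ^ (D + α) := by ring
    exact le_trans h1 h4

theorem stable_power_harnack_inequality
    (d : ℕ) (hd : 1 ≤ d) (α : ℝ) (hα : α ∈ Set.Ioo (0 : ℝ) 2)
    (c₁ c₂ : ℝ) (hc₁ : 0 < c₁) (hc₁₂ : c₁ ≤ c₂) (p : ℝ) (hp : 1 < p)
    (q : ℝ → EuclideanSpace ℝ (Fin d) → EuclideanSpace ℝ (Fin d) → ℝ)
    (hmeas : ∀ t x, Measurable (q t x))
    (hlow : ∀ t > (0 : ℝ), ∀ x y,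
      c₁ * min (t ^ (-(d : ℝ) / α)) (t / ‖x - y‖ ^ ((d : ℝ) + α)) ≤ q t x y)
    (hup : ∀ t > (0 : ℝ), ∀ x y,
      q t x y ≤ c₂ * min (t ^ (-(d : ℝ) / α)) (t / ‖x - y‖ ^ ((d : ℝ) + α)))
    (hnorm : ∀ t > (0 : ℝ), ∀ y, ∫ z, q t y z = 1) :
    ∃ C > (0 : ℝ), ∀ t > (0 : ℝ), ∀ x y : EuclideanSpace ℝ (Fin d),
      ∀ f : EuclideanSpace ℝ (Fin d) → ℝ, Measurable f → (∀ z, 0 ≤ f z) →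
      (∃ M, ∀ z, f z ≤ M) →
      (∫ z, f z * q t x z) ^ p ≤
        C * (1 + ‖x - y‖ / t ^ (1 / α)) ^ (p * ((d : ℝ) + α)) *
          ∫ z, (f z) ^ p * q t y z := by
  have hc₂ : 0 < c₂ := lt_of_lt_of_le hc₁ hc₁₂
  have hp0 : 0 < p := lt_trans zero_lt_one hp
  refine ⟨(c₂ / c₁) ^ p, Real.rpow_pos_of_pos (div_pos hc₂ hc₁) _, ?_⟩
  intro t ht x y f hfmeas hfnn hfbd
  obtain ⟨M, hM⟩ := hfbd
  have hα0 : 0 < α := hα.1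
  -- nonnegativity of q
  have hqnn : ∀ x' z, 0 ≤ q t x' z := by
    intro x' z
    refine le_trans ?_ (hlow t ht x' z)
    apply mul_nonneg hc₁.le
    exact le_min (Real.rpow_nonneg ht.le _)
      (div_nonneg ht.le (Real.rpow_nonneg (norm_nonneg _) _))
  set B : ℝ := 1 + ‖x - y‖ / t ^ (1 / α) with hB_def
  have hB1 : (1 : ℝ) ≤ B := by
    have h0 : 0 ≤ ‖x - y‖ / t ^ (1 / α) :=
      div_nonneg (norm_nonneg _) (Real.rpow_nonneg ht.le _)
    rw [hB_def]; linarith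
  have hBE : (0 : ℝ) ≤ B ^ ((d : ℝ) + α) :=
    Real.rpow_nonneg (le_trans zero_le_one hB1) _
  set K : ℝ := c₂ / c₁ * B ^ ((d : ℝ) + α) with hK_def
  have hK0 : 0 ≤ K := mul_nonneg (div_pos hc₂ hc₁).le hBE
  -- pointwise comparison away from y
  have hptw : ∀ z, z ≠ y → q t x z ≤ K * q t y z := by
    intro z hz
    have hvy : 0 < ‖y - z‖ := by
      rw [norm_pos_iff, sub_ne_zero]
      exact fun h => hz h.symm
    have htri : ‖y - z‖ ≤ ‖x - z‖ + ‖x - y‖ := by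
      calc ‖y - z‖ = ‖(x - z) - (x - y)‖ := by congr 1; abel
        _ ≤ ‖x - z‖ + ‖x - y‖ := norm_sub_le _ _
    have hkey := stable_min_compare (d : ℝ) α t (Nat.cast_nonneg d) hα0 ht
      ‖x - z‖ ‖y - z‖ ‖x - y‖ (norm_nonneg _) hvy (norm_nonneg _) htri
    calc q t x z ≤ c₂ * min (t ^ (-(d : ℝ) / α)) (t / ‖x - z‖ ^ ((d : ℝ) + α)) :=
        hup t ht x z
      _ ≤ c₂ * (B ^ ((d : ℝ) + α) *
          min (t ^ (-(d : ℝ) / α)) (t / ‖y - z‖ ^ ((d : ℝ) + α))) :=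
        mul_le_mul_of_nonneg_left hkey hc₂.le
      _ = K * (c₁ * min (t ^ (-(d : ℝ) / α)) (t / ‖y - z‖ ^ ((d : ℝ) + α))) := by
        rw [hK_def]; field_simp
      _ ≤ K * q t y z := mul_le_mul_of_nonneg_left (hlow t ht y z) hK0
  -- integrability of q t x, q t y
  have hint : ∀ x', Integrable (q t x') := by
    intro x'
    by_contra h
    have h1 := hnorm t ht x'
    rw [integral_undef h] at h1
    norm_num at h1
  have hM0 : 0 ≤ M := le_trans (hfnn 0) (hM 0)
  have hfqint : ∀ x', Integrable (fun z => f z * q t x' z) := by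
    intro x'
    refine Integrable.mono' ((hint x').const_mul M)
      ((hfmeas.mul (hmeas t x')).aestronglyMeasurable) (ae_of_all _ fun z => ?_)
    rw [Real.norm_eq_abs, abs_of_nonneg (mul_nonneg (hfnn z) (hqnn x' z))]
    exact mul_le_mul_of_nonneg_right (hM z) (hqnn x' z)
  -- a.e. comparison and integral comparison
  haveI : Nontrivial (EuclideanSpace ℝ (Fin d)) := by
    refine ⟨0, EuclideanSpace.single ⟨0, hd⟩ 1, fun h => ?_⟩
    have := congrArg (fun v : EuclideanSpace ℝ (Fin d) => v ⟨0, hd⟩) h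
    simp [EuclideanSpace.single_apply] at this
  have hsingleton : (volume : Measure (EuclideanSpace ℝ (Fin d))) {y} = 0 :=
    measure_singleton y
  have hstepC : (∫ z, f z * q t x z) ≤ K * ∫ z, f z * q t y z := by
    rw [← integral_const_mul]
    refine integral_mono_ae (hfqint x) ((hfqint y).const_mul K) ?_
    refine (ae_iff.2 ?_)
    refine measure_mono_null (fun z hz => ?_) hsingleton
    simp only [Set.mem_setOf_eq, not_le] at hz
    by_contra hzy
    have hzy' : z ≠ y := hzy
    have := hptw z hzy'
    have h2 : f z * q t x z ≤ K * (f z * q t y z) := by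
      calc f z * q t x z ≤ f z * (K * q t y z) :=
          mul_le_mul_of_nonneg_left this (hfnn z)
        _ = K * (f z * q t y z) := by ring
    exact absurd h2 (not_le.2 hz)
  -- Jensen via the probability measure with density q t y
  set μ : Measure (EuclideanSpace ℝ (Fin d)) :=
    volume.withDensity fun z => (Real.toNNReal (q t y z) : ENNReal) with hμ_def
  have hqynn : ∀ᵐ z, 0 ≤ q t y z := ae_of_all _ (hqnn y)
  haveI : IsProbabilityMeasure μ := by
    constructor
    rw [hμ_def, withDensity_apply _ MeasurableSet.univ, Measure.restrict_univ]
    have : ∀ z, (Real.toNNReal (q t y z) : ENNReal) = ENNReal.ofReal (q t y z) := fun z => rfl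
    simp_rw [this]
    rw [← ofReal_integral_eq_lintegral_ofReal (hint y) hqynn, hnorm t ht y]
    norm_num
  have hμint : ∀ g : EuclideanSpace ℝ (Fin d) → ℝ,
      (∫ z, g z ∂μ) = ∫ z, g z * q t y z := by
    intro g
    rw [hμ_def, integral_withDensity_eq_integral_smul ((hmeas t y).real_toNNReal) g]
    refine integral_congr_ae (ae_of_all _ fun z => ?_)
    simp [NNReal.smul_def, Real.coe_toNNReal _ (hqnn y z), mul_comm]
  have hfiμ : Integrable f μ :=
    Integrable.mono' (integrable_const M) hfmeas.aestronglyMeasurable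
      (ae_of_all _ fun z => by
        rw [Real.norm_eq_abs, abs_of_nonneg (hfnn z)]; exact hM z)
  have hfpμ : Integrable (fun z => f z ^ p) μ :=
    Integrable.mono' (integrable_const (M ^ p))
      (((continuous_iff_continuousAt.2 fun x =>
        Real.continuousAt_rpow_const x p (Or.inr hp0.le)).measurable).comp
        hfmeas).aestronglyMeasurable
      (ae_of_all _ fun z => by
        rw [Real.norm_eq_abs, abs_of_nonneg (Real.rpow_nonneg (hfnn z) _)]
        exact Real.rpow_le_rpow (hfnn z) (hM z) hp0.le)
  have hjensen : (∫ z, f z ∂μ) ^ p ≤ ∫ z, f z ^ p ∂μ := by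
    have hconv : ConvexOn ℝ (Set.Ici 0) fun x : ℝ => x ^ p := convexOn_rpow hp.le
    have hcont : ContinuousOn (fun x : ℝ => x ^ p) (Set.Ici 0) := fun x _ =>
      (Real.continuousAt_rpow_const x p (Or.inr hp0.le)).continuousWithinAt
    exact hconv.map_integral_le hcont isClosed_Ici
      (ae_of_all _ fun z => Set.mem_Ici.2 (hfnn z)) hfiμ hfpμ
  have hjensen' : (∫ z, f z * q t y z) ^ p ≤ ∫ z, f z ^ p * q t y z := by
    rw [← hμint f, ← hμint (fun z => f z ^ p)]
    exact hjensen
  -- assemble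
  have hInn : 0 ≤ ∫ z, f z * q t x z :=
    integral_nonneg fun z => mul_nonneg (hfnn z) (hqnn x z)
  have hInn' : 0 ≤ ∫ z, f z * q t y z :=
    integral_nonneg fun z => mul_nonneg (hfnn z) (hqnn y z)
  have hKp : K ^ p = (c₂ / c₁) ^ p * B ^ (p * ((d : ℝ) + α)) := by
    rw [hK_def, Real.mul_rpow (div_pos hc₂ hc₁).le hBE,
      ← Real.rpow_mul (le_trans zero_le_one hB1), mul_comm ((d : ℝ) + α) p]
  calc (∫ z, f z * q t x z) ^ p ≤ (K * ∫ z, f z * q t y z) ^ p :=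
      Real.rpow_le_rpow hInn hstepC hp0.le
    _ = K ^ p * (∫ z, f z * q t y z) ^ p :=
      Real.mul_rpow hK0 hInn'
    _ ≤ K ^ p * ∫ z, f z ^ p * q t y z :=
      mul_le_mul_of_nonneg_left hjensen' (Real.rpow_nonneg hK0 _)
    _ = (c₂ / c₁) ^ p * B ^ (p * ((d : ℝ) + α)) * ∫ z, f z ^ p * q t y z := by
      rw [hKp]
end

section
/- Let d ≥ 1 be an integer, α ∈ (0,2), and let c₁, c₂, c₃, c₄, c₅, c₆, c₇ be positive constants. Suppose p : (0,1] × ℝ^d × ℝ^d → ℝ is measurable in its last variable, satisfies ∫_{ℝ^d} p(t,x,z) dz = 1 for all t ∈ (0,1] and x ∈ ℝ^d, and satisfies: (T1) c₂·min(t^(−d/α), t/|x−y|^(d+α)) ≤ p(t,x,y) ≤ c₁·min(t^(−d/α), t/|x−y|^(d+α)) whenever t ∈ (0,1] and |x−y| ≤ 1; (T2) c₅·(t/|x−y|)^(c₆|x−y|) ≤ p(t,x,y) ≤ c₃·(t/|x−y|)^(c₄|x−y|) whenever t ∈ (0,1] and |x−y| > 1; (T3) p(t,x,y) ≤ c₇·t^(−d/α)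 for all t ∈ (0,1] and x, y ∈ ℝ^d. Then there is a constant C > 0 (depending only on d, α and the cᵢ) such that for all t ∈ (0,1] and x, y ∈ ℝ^d, ∫_{ℝ^d} log(p(t,x,z)/p(t,y,z)) · p(t,x,z) dz ≤ C·(1 + |x−y|)·log((2 + |x−y|)/t). -/
open Real MeasureTheory

set_option maxHeartbeats 4000000 in
theorem truncated_stable_entropy_estimate
    (d : ℕ) (hd : 1 ≤ d) (α : ℝ) (hα : α ∈ Set.Ioo (0 : ℝ) 2)
    (c₁ c₂ c₃ c₄ c₅ c₆ c₇ : ℝ)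
    (hc₁ : 0 < c₁) (hc₂ : 0 < c₂) (hc₃ : 0 < c₃) (hc₄ : 0 < c₄)
    (hc₅ : 0 < c₅) (hc₆ : 0 < c₆) (hc₇ : 0 < c₇)
    (p : ℝ → EuclideanSpace ℝ (Fin d) → EuclideanSpace ℝ (Fin d) → ℝ)
    (hmeas : ∀ t x, Measurable (p t x))
    (hnorm : ∀ t ∈ Set.Ioc (0 : ℝ) 1, ∀ x, ∫ z, p t x z = 1)
    (hT1 : ∀ t ∈ Set.Ioc (0 : ℝ) 1, ∀ x y : EuclideanSpace ℝ (Fin d), ‖x - y‖ ≤ 1 →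
      c₂ * min (t ^ (-(d : ℝ) / α)) (t / ‖x - y‖ ^ ((d : ℝ) + α)) ≤ p t x y ∧
      p t x y ≤ c₁ * min (t ^ (-(d : ℝ) / α)) (t / ‖x - y‖ ^ ((d : ℝ) + α)))
    (hT2 : ∀ t ∈ Set.Ioc (0 : ℝ) 1, ∀ x y : EuclideanSpace ℝ (Fin d), 1 < ‖x - y‖ →
      c₅ * (t / ‖x - y‖) ^ (c₆ * ‖x - y‖) ≤ p t x y ∧
      p t x y ≤ c₃ * (t / ‖x - y‖) ^ (c₄ * ‖x - y‖))
    (hT3 : ∀ t ∈ Set.Ioc (0 : ℝ) 1, ∀ x y : EuclideanSpace ℝ (Fin d),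
      p t x y ≤ c₇ * t ^ (-(d : ℝ) / α)) :
    ∃ C > (0 : ℝ), ∀ t ∈ Set.Ioc (0 : ℝ) 1, ∀ x y : EuclideanSpace ℝ (Fin d),
      ∫ z, Real.log (p t x z / p t y z) * p t x z ≤
        C * (1 + ‖x - y‖) * Real.log ((2 + ‖x - y‖) / t) := by
  obtain ⟨hα0, hα2⟩ := hα
  have hlog2 : (0:ℝ) < Real.log 2 := Real.log_pos one_lt_two
  -- abbreviations
  obtain ⟨R₀, hR₀def⟩ : ∃ X : ℝ, X = max 1 (((d:ℝ)+4)/c₄) := ⟨_, rfl⟩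
  have hR₀1 : (1:ℝ) ≤ R₀ := hR₀def ▸ le_max_left _ _
  obtain ⟨K₀, hK₀def⟩ : ∃ X : ℝ, X = c₃ * (2*R₀)^(d+3) := ⟨_, rfl⟩
  have hK₀ : 0 < K₀ := by
    rw [hK₀def]
    have : (0:ℝ) < R₀ := lt_of_lt_of_le one_pos hR₀1
    positivity
  obtain ⟨Ax, hAxdef⟩ : ∃ X : ℝ,
      X = (|Real.log (c₇/c₂)| + |Real.log (c₇/c₅)|)/Real.log 2 + (d:ℝ)/α + 1 + c₆ := ⟨_, rfl⟩
  have hAx : 0 < Ax := by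
    have h1 : 0 ≤ (|Real.log (c₇/c₂)| + |Real.log (c₇/c₅)|)/Real.log 2 :=
      div_nonneg (by positivity) hlog2.le
    have h2 : 0 ≤ (d:ℝ)/α := div_nonneg (Nat.cast_nonneg d) hα0.le
    rw [hAxdef]; linarith
  obtain ⟨A', hA'def⟩ : ∃ X : ℝ, X = Ax * (1 + 1/Real.log 2) := ⟨_, rfl⟩
  have hA' : 0 < A' := by
    have h1 : 0 < 1 + 1/Real.log 2 := by positivity
    rw [hA'def]; exact mul_pos hAx h1
  obtain ⟨J, hJdef⟩ : ∃ X : ℝ,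
      X = ∫ w : EuclideanSpace ℝ (Fin d), (((1+‖w‖)^(d+1):ℝ))⁻¹ := ⟨_, rfl⟩
  have hJ0 : 0 ≤ J := hJdef ▸ integral_nonneg (fun w => by positivity)
  obtain ⟨K, hKdef⟩ : ∃ X : ℝ, X = 4 + K₀ * J := ⟨_, rfl⟩
  have hK : 0 < K := by
    have := mul_nonneg hK₀.le hJ0
    rw [hKdef]; linarith
  -- basic integrability of the shape function
  have hshape : Integrable (fun w : EuclideanSpace ℝ (Fin d) => (((1+‖w‖)^(d+1):ℝ))⁻¹) := by
    have h1 : Integrable (fun w : EuclideanSpace ℝ (Fin d) => ((1:ℝ)+‖w‖) ^ (-((d:ℝ)+1))) := by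
      apply integrable_one_add_norm
      simp
    apply h1.congr
    filter_upwards with w
    have hw : (0:ℝ) < 1 + ‖w‖ := by positivity
    rw [← Real.rpow_natCast (1+‖w‖) (d+1), ← Real.rpow_neg hw.le]
    push_cast
    ring_nf
  -- nonnegativity of p
  have hp0 : ∀ t ∈ Set.Ioc (0:ℝ) 1, ∀ x z : EuclideanSpace ℝ (Fin d), 0 ≤ p t x z := by
    intro t ht x z
    rcases le_or_gt ‖x - z‖ 1 with h | h
    · refine le_trans ?_ (hT1 t ht x z h).1
      have h1 : (0:ℝ) ≤ t ^ (-(d:ℝ)/α) := Real.rpow_nonneg ht.1.le _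
      have h2 : (0:ℝ) ≤ t / ‖x - z‖ ^ ((d:ℝ)+α) :=
        div_nonneg ht.1.le (Real.rpow_nonneg (norm_nonneg _) _)
      exact mul_nonneg hc₂.le (le_min h1 h2)
    · refine le_trans ?_ (hT2 t ht x z h).1
      exact mul_nonneg hc₅.le
        (Real.rpow_nonneg (div_nonneg ht.1.le (norm_nonneg _)) _)
  -- tail bound
  have htail : ∀ t ∈ Set.Ioc (0:ℝ) 1, ∀ x z : EuclideanSpace ℝ (Fin d), 1 < ‖x - z‖ →
      p t x z ≤ K₀ * (((1+‖x - z‖)^(d+3):ℝ))⁻¹ := by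
    intro t ht x z h
    set s := ‖x - z‖ with hsdef
    have hs1 : (1:ℝ) ≤ s := h.le
    have hs0 : (0:ℝ) < s := lt_of_lt_of_le one_pos hs1
    have hub := (hT2 t ht x z h).2
    have h1 : (t/s)^(c₄*s) ≤ (1/s)^(c₄*s) := by
      apply Real.rpow_le_rpow (div_nonneg ht.1.le hs0.le) _ (by positivity)
      gcongr
      exact ht.2
    have h2 : ((1:ℝ)/s)^(c₄*s) = (s^(c₄*s))⁻¹ := by
      rw [one_div, Real.inv_rpow hs0.le]
    have hkey : ((1+s)^(d+3) : ℝ) ≤ (2*R₀)^(d+3) * s^(c₄*s) := by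
      have h1s : (1+s : ℝ) ≤ 2*s := by linarith
      have h3 : ((1+s)^(d+3) : ℝ) ≤ (2*s)^(d+3) := by
        apply pow_le_pow_left₀ (by positivity) h1s
      have h4 : ((2*s)^(d+3) : ℝ) = 2^(d+3) * s^(d+3) := mul_pow 2 s (d+3)
      have h5 : (s^(d+3) : ℝ) ≤ R₀^(d+3) * s^(c₄*s) := by
        rcases le_or_gt s R₀ with hc | hc
        · have h6 : (s^(d+3) : ℝ) ≤ R₀^(d+3) := pow_le_pow_left₀ hs0.le hc _
          have h7 : (1:ℝ) ≤ s^(c₄*s) := by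
            have := Real.rpow_le_rpow_of_exponent_le hs1 (le_of_lt (by positivity : (0:ℝ) < c₄*s))
            simpa using this
          nlinarith [pow_nonneg (le_trans zero_le_one hR₀1) (d+3)]
        · have hmle : ((d:ℝ)+3) ≤ c₄*s := by
            have h8 : ((d:ℝ)+4)/c₄ ≤ R₀ := hR₀def ▸ le_max_right _ _
            have h9 : ((d:ℝ)+4) ≤ c₄ * R₀ := by
              rw [div_le_iff₀ hc₄] at h8; linarith
            nlinarith
          have h10 : (s^(d+3) : ℝ) = s^(((d:ℝ)+3)) := by
            rw [← Real.rpow_natCast s (d+3)]; norm_num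
          have h11 : s^(((d:ℝ)+3)) ≤ s^(c₄*s) := Real.rpow_le_rpow_of_exponent_le hs1 hmle
          have h12 : (1:ℝ) ≤ R₀^(d+3) := one_le_pow₀ hR₀1
          nlinarith [Real.rpow_nonneg hs0.le (c₄*s)]
      calc ((1+s)^(d+3) : ℝ) ≤ 2^(d+3) * s^(d+3) := by rw [← h4]; exact h3
        _ ≤ 2^(d+3) * (R₀^(d+3) * s^(c₄*s)) := by
            apply mul_le_mul_of_nonneg_left h5 (by positivity)
        _ = (2*R₀)^(d+3) * s^(c₄*s) := by rw [mul_pow]; ring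
    have hb : (0:ℝ) < (1+s)^(d+3) := by positivity
    have ha : (0:ℝ) < s^(c₄*s) := Real.rpow_pos_of_pos hs0 _
    have hinv : (s^(c₄*s))⁻¹ ≤ (2*R₀)^(d+3) * (((1+s)^(d+3):ℝ))⁻¹ := by
      rw [← div_eq_mul_inv, le_div_iff₀ hb, inv_mul_eq_div, div_le_iff₀ ha]
      linarith [hkey]
    calc p t x z ≤ c₃ * (t/s)^(c₄*s) := hub
      _ ≤ c₃ * (s^(c₄*s))⁻¹ := by
          apply mul_le_mul_of_nonneg_left _ hc₃.le
          rw [← h2]; exact h1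
      _ ≤ c₃ * ((2*R₀)^(d+3) * (((1+s)^(d+3):ℝ))⁻¹) :=
          mul_le_mul_of_nonneg_left hinv hc₃.le
      _ = K₀ * (((1+s)^(d+3):ℝ))⁻¹ := by rw [hK₀def]; ring
  -- global bound
  have hglob : ∀ t ∈ Set.Ioc (0:ℝ) 1, ∀ x z : EuclideanSpace ℝ (Fin d),
      p t x z ≤ (c₇ * t^(-(d:ℝ)/α) * 2^(d+3) + K₀) * (((1+‖x - z‖)^(d+3):ℝ))⁻¹ := by
    intro t ht x z
    set s := ‖x - z‖ with hsdef
    have hs0 : (0:ℝ) ≤ s := norm_nonneg _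
    have hb : (0:ℝ) < ((1+s)^(d+3):ℝ) := by positivity
    have hT : (0:ℝ) ≤ c₇ * t^(-(d:ℝ)/α) * 2^(d+3) :=
      mul_nonneg (mul_nonneg hc₇.le (Real.rpow_nonneg ht.1.le _)) (by positivity)
    rcases le_or_gt s 1 with h | h
    · have h1 : p t x z ≤ c₇ * t^(-(d:ℝ)/α) := hT3 t ht x z
      have h2 : ((1+s)^(d+3):ℝ) ≤ 2^(d+3) := by
        apply pow_le_pow_left₀ (by positivity) (by linarith)
      have h3 : (2:ℝ)^(d+3) * (((1+s)^(d+3):ℝ))⁻¹ ≥ 1 := by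
        rw [ge_iff_le, ← div_eq_mul_inv, le_div_iff₀ hb]
        simpa using h2
      calc p t x z ≤ c₇ * t^(-(d:ℝ)/α) := h1
        _ ≤ c₇ * t^(-(d:ℝ)/α) * (2^(d+3) * (((1+s)^(d+3):ℝ))⁻¹) := by
            nlinarith [mul_nonneg hc₇.le (Real.rpow_nonneg ht.1.le (-(d:ℝ)/α))]
        _ ≤ (c₇ * t^(-(d:ℝ)/α) * 2^(d+3) + K₀) * (((1+s)^(d+3):ℝ))⁻¹ := by
            have : (0:ℝ) ≤ (((1+s)^(d+3):ℝ))⁻¹ := by positivity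
            nlinarith
    · calc p t x z ≤ K₀ * (((1+s)^(d+3):ℝ))⁻¹ := htail t ht x z h
        _ ≤ (c₇ * t^(-(d:ℝ)/α) * 2^(d+3) + K₀) * (((1+s)^(d+3):ℝ))⁻¹ := by
            have : (0:ℝ) ≤ (((1+s)^(d+3):ℝ))⁻¹ := by positivity
            nlinarith
  -- integrability of p and of the second moment integrand
  have hmom_int : ∀ t ∈ Set.Ioc (0:ℝ) 1, ∀ x : EuclideanSpace ℝ (Fin d),
      Integrable (fun z => ((1+‖x - z‖)^2) * p t x z) := by
    intro t ht x
    have hSint : Integrable (fun z : EuclideanSpace ℝ (Fin d) =>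
        (c₇ * t^(-(d:ℝ)/α) * 2^(d+3) + K₀) * (((1+‖x - z‖)^(d+1):ℝ))⁻¹) :=
      ((hshape.comp_sub_left x).const_mul _)
    apply hSint.mono'
    · exact ((by fun_prop : Measurable (fun z : EuclideanSpace ℝ (Fin d) =>
        ((1:ℝ)+‖x - z‖)^2)).mul (hmeas t x)).aestronglyMeasurable
    · filter_upwards with z
      have hs0 : (0:ℝ) ≤ ‖x - z‖ := norm_nonneg _
      have hnn : (0:ℝ) ≤ ((1+‖x - z‖)^2) * p t x z := by
        have := hp0 t ht x z
        positivity
      rw [Real.norm_of_nonneg hnn]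
      have h1 : ((1+‖x - z‖)^2) * p t x z ≤
          ((1+‖x - z‖)^2) * ((c₇ * t^(-(d:ℝ)/α) * 2^(d+3) + K₀) * (((1+‖x - z‖)^(d+3):ℝ))⁻¹) :=
        mul_le_mul_of_nonneg_left (hglob t ht x z) (by positivity)
      have h2 : ((1+‖x - z‖)^2) * (((1+‖x - z‖)^(d+3):ℝ))⁻¹ = (((1+‖x - z‖)^(d+1):ℝ))⁻¹ := by
        have hb : (0:ℝ) < 1+‖x - z‖ := by positivity
        rw [show d+3 = (d+1)+2 by ring, pow_add, mul_inv]
        field_simp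
      calc ((1+‖x - z‖)^2) * p t x z
          ≤ ((1+‖x - z‖)^2) * ((c₇ * t^(-(d:ℝ)/α) * 2^(d+3) + K₀) * (((1+‖x - z‖)^(d+3):ℝ))⁻¹) := h1
        _ = (c₇ * t^(-(d:ℝ)/α) * 2^(d+3) + K₀) * (((1+‖x - z‖)^(d+1):ℝ))⁻¹ := by
            rw [← h2]; ring
  have hp_int : ∀ t ∈ Set.Ioc (0:ℝ) 1, ∀ x : EuclideanSpace ℝ (Fin d),
      Integrable (p t x) := by
    intro t ht x
    have hSint : Integrable (fun z : EuclideanSpace ℝ (Fin d) =>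
        (c₇ * t^(-(d:ℝ)/α) * 2^(d+3) + K₀) * (((1+‖x - z‖)^(d+3):ℝ))⁻¹) := by
      have : Integrable (fun w : EuclideanSpace ℝ (Fin d) => (((1+‖w‖)^(d+3):ℝ))⁻¹) := by
        apply hshape.mono'
        · exact (by fun_prop : Measurable (fun w : EuclideanSpace ℝ (Fin d) =>
            (((1+‖w‖)^(d+3):ℝ))⁻¹)).aestronglyMeasurable
        · filter_upwards with w
          have hb : (0:ℝ) < 1+‖w‖ := by positivity
          rw [Real.norm_of_nonneg (by positivity)]
          apply inv_anti₀ (by positivity)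
          exact pow_le_pow_right₀ (le_add_of_nonneg_right (norm_nonneg w)) (by omega)
      exact (this.comp_sub_left x).const_mul _
    apply hSint.mono' (hmeas t x).aestronglyMeasurable
    filter_upwards with z
    rw [Real.norm_of_nonneg (hp0 t ht x z)]
    exact hglob t ht x z
  -- moment bound
  have hmom : ∀ t ∈ Set.Ioc (0:ℝ) 1, ∀ x : EuclideanSpace ℝ (Fin d),
      ∫ z, ((1+‖x - z‖)^2) * p t x z ≤ K := by
    intro t ht x
    set S := Metric.closedBall x 1 with hSdef
    have hS : MeasurableSet S := measurableSet_closedBall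
    have hsplit := integral_add_compl hS (hmom_int t ht x)
    have hball : ∫ z in S, ((1+‖x - z‖)^2) * p t x z ≤ 4 := by
      have step1 : ∫ z in S, ((1+‖x - z‖)^2) * p t x z ≤ ∫ z in S, 4 * p t x z := by
        apply setIntegral_mono_on (hmom_int t ht x).integrableOn
          (((hp_int t ht x).const_mul 4).integrableOn) hS
        intro z hz
        have hz1 : ‖x - z‖ ≤ 1 := by
          rw [hSdef, Metric.mem_closedBall, dist_comm, dist_eq_norm] at hz
          exact hz
        have h2 : ((1+‖x - z‖)^2 : ℝ) ≤ 4 := by nlinarith [norm_nonneg (x - z)]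
        exact mul_le_mul_of_nonneg_right h2 (hp0 t ht x z)
      have step2 : ∫ z in S, 4 * p t x z = 4 * ∫ z in S, p t x z := integral_const_mul 4 _
      have step3 : ∫ z in S, p t x z ≤ 1 := by
        rw [← hnorm t ht x]
        exact setIntegral_le_integral (hp_int t ht x)
          (Filter.Eventually.of_forall (hp0 t ht x))
      linarith
    have hcompl : ∫ z in Sᶜ, ((1+‖x - z‖)^2) * p t x z ≤ K₀ * J := by
      have step1 : ∫ z in Sᶜ, ((1+‖x - z‖)^2) * p t x z ≤
          ∫ z in Sᶜ, K₀ * (((1+‖x - z‖)^(d+1):ℝ))⁻¹ := by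
        apply setIntegral_mono_on (hmom_int t ht x).integrableOn
          (((hshape.comp_sub_left x).const_mul K₀).integrableOn) hS.compl
        intro z hz
        have hz1 : 1 < ‖x - z‖ := by
          rw [hSdef, Set.mem_compl_iff, Metric.mem_closedBall, not_le, dist_comm,
            dist_eq_norm] at hz
          exact hz
        have hb : (0:ℝ) < 1+‖x - z‖ := by positivity
        have h1 : ((1+‖x - z‖)^2) * p t x z ≤
            ((1+‖x - z‖)^2) * (K₀ * (((1+‖x - z‖)^(d+3):ℝ))⁻¹) :=
          mul_le_mul_of_nonneg_left (htail t ht x z hz1) (by positivity)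
        have h2 : ((1+‖x - z‖)^2) * (((1+‖x - z‖)^(d+3):ℝ))⁻¹ = (((1+‖x - z‖)^(d+1):ℝ))⁻¹ := by
          rw [show d+3 = (d+1)+2 by ring, pow_add, mul_inv]
          field_simp
        calc ((1+‖x - z‖)^2) * p t x z
            ≤ ((1+‖x - z‖)^2) * (K₀ * (((1+‖x - z‖)^(d+3):ℝ))⁻¹) := h1
          _ = K₀ * (((1+‖x - z‖)^(d+1):ℝ))⁻¹ := by rw [← h2]; ring
      have step2 : ∫ z in Sᶜ, K₀ * (((1+‖x - z‖)^(d+1):ℝ))⁻¹ ≤ K₀ * J := by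
        rw [integral_const_mul]
        apply mul_le_mul_of_nonneg_left _ hK₀.le
        have step3 : ∫ z in Sᶜ, (((1+‖x - z‖)^(d+1):ℝ))⁻¹ ≤
            ∫ z : EuclideanSpace ℝ (Fin d), (((1+‖x - z‖)^(d+1):ℝ))⁻¹ :=
          setIntegral_le_integral (hshape.comp_sub_left x)
            (Filter.Eventually.of_forall (fun z => by positivity))
        have step4 : ∫ z : EuclideanSpace ℝ (Fin d), (((1+‖x - z‖)^(d+1):ℝ))⁻¹ = J := by
          rw [hJdef]
          exact integral_sub_left_eq_self
            (fun w : EuclideanSpace ℝ (Fin d) => (((1+‖w‖)^(d+1):ℝ))⁻¹) volume x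
        linarith
      linarith
    rw [hKdef, ← hsplit]
    linarith
  -- pointwise log bound
  have hlog : ∀ t ∈ Set.Ioc (0:ℝ) 1, ∀ x y z : EuclideanSpace ℝ (Fin d), z ≠ y →
      Real.log (p t x z / p t y z) ≤
        Ax * (1+‖y - z‖) * Real.log ((2+‖y - z‖)/t) := by
    intro t ht x y z hz
    have hd0 : (0:ℝ) ≤ (d:ℝ)/α := div_nonneg (Nat.cast_nonneg d) hα0.le
    set ρ := ‖y - z‖ with hρdef
    have hρ0 : (0:ℝ) < ρ := by
      rw [hρdef, norm_pos_iff]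
      exact sub_ne_zero_of_ne hz.symm
    have ht0 : (0:ℝ) < t := ht.1
    have hLg2 : Real.log 2 ≤ Real.log ((2+ρ)/t) := by
      apply Real.log_le_log two_pos
      rw [le_div_iff₀ ht0]
      nlinarith [ht.2]
    set Lg := Real.log ((2+ρ)/t) with hLgdef
    have hLg0 : (0:ℝ) < Lg := lt_of_lt_of_le hlog2 hLg2
    have hnlogt : -Real.log t ≤ Lg := by
      rw [hLgdef, Real.log_div (by positivity) (ne_of_gt ht0)]
      have : (0:ℝ) ≤ Real.log (2+ρ) := Real.log_nonneg (by linarith)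
      linarith
    have hRHS0 : 0 ≤ Ax * (1+ρ) * Lg :=
      mul_nonneg (mul_nonneg hAx.le (by linarith)) hLg0.le
    have hpy : 0 < p t y z := by
      rcases le_or_gt ρ 1 with h | h
      · have hmin : 0 < min (t ^ (-(d:ℝ)/α)) (t / ρ ^ ((d:ℝ)+α)) :=
          lt_min (Real.rpow_pos_of_pos ht0 _) (div_pos ht0 (Real.rpow_pos_of_pos hρ0 _))
        exact lt_of_lt_of_le (mul_pos hc₂ hmin) (hT1 t ht y z h).1
      · exact lt_of_lt_of_le (mul_pos hc₅
          (Real.rpow_pos_of_pos (div_pos ht0 (lt_trans one_pos h)) _)) (hT2 t ht y z h).1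
    rcases eq_or_lt_of_le (hp0 t ht x z) with hpx | hpx
    · rw [← hpx, zero_div, Real.log_zero]
      exact hRHS0
    · have hlogdiv : Real.log (p t x z / p t y z) =
          Real.log (p t x z) - Real.log (p t y z) :=
        Real.log_div (ne_of_gt hpx) (ne_of_gt hpy)
      have hux : Real.log (p t x z) ≤ Real.log c₇ + ((d:ℝ)/α) * (-Real.log t) := by
        calc Real.log (p t x z) ≤ Real.log (c₇ * t ^ (-(d:ℝ)/α)) :=
              Real.log_le_log hpx (hT3 t ht x z)
          _ = Real.log c₇ + (-(d:ℝ)/α) * Real.log t := by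
              rw [Real.log_mul (ne_of_gt hc₇) (ne_of_gt (Real.rpow_pos_of_pos ht0 _)),
                Real.log_rpow ht0]
          _ = Real.log c₇ + ((d:ℝ)/α) * (-Real.log t) := by ring
      rcases le_or_gt ρ 1 with hcase | hcase
      · -- near regime
        have hlb : c₂ * t ≤ p t y z := by
          refine le_trans ?_ (hT1 t ht y z hcase).1
          have hexp : -(d:ℝ)/α ≤ 0 :=
            div_nonpos_of_nonpos_of_nonneg (neg_nonpos.mpr (Nat.cast_nonneg d)) hα0.le
          have h1 : t ≤ t ^ (-(d:ℝ)/α) := by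
            have := Real.one_le_rpow_of_pos_of_le_one_of_nonpos ht0 ht.2 hexp
            linarith [ht.2]
          have h2 : t ≤ t / ρ ^ ((d:ℝ)+α) := by
            have hρe : ρ ^ ((d:ℝ)+α) ≤ 1 :=
              Real.rpow_le_one hρ0.le hcase (by positivity)
            have hρe0 : (0:ℝ) < ρ ^ ((d:ℝ)+α) := Real.rpow_pos_of_pos hρ0 _
            rw [le_div_iff₀ hρe0]
            nlinarith
          exact mul_le_mul_of_nonneg_left (le_min h1 h2) hc₂.le
        have hly : Real.log c₂ + Real.log t ≤ Real.log (p t y z) := by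
          have := Real.log_le_log (by positivity) hlb
          rw [Real.log_mul (ne_of_gt hc₂) (ne_of_gt ht0)] at this
          linarith
        have habs1 : Real.log c₇ - Real.log c₂ ≤ |Real.log (c₇/c₂)| := by
          rw [← Real.log_div (ne_of_gt hc₇) (ne_of_gt hc₂)]
          exact le_abs_self _
        have hcoef : |Real.log (c₇/c₂)| ≤ (|Real.log (c₇/c₂)|/Real.log 2) * Lg := by
          rw [div_mul_eq_mul_div, le_div_iff₀ hlog2]
          exact mul_le_mul_of_nonneg_left hLg2 (abs_nonneg _)
        have e2 : ((d:ℝ)/α + 1) * (-Real.log t) ≤ ((d:ℝ)/α + 1) * Lg :=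
          mul_le_mul_of_nonneg_left hnlogt (by linarith)
        have h5 : |Real.log (c₇/c₂)|/Real.log 2 + ((d:ℝ)/α + 1) ≤ Ax := by
          rw [hAxdef, add_div]
          have h6 : 0 ≤ |Real.log (c₇/c₅)|/Real.log 2 := div_nonneg (abs_nonneg _) hlog2.le
          linarith
        have e4 : (|Real.log (c₇/c₂)|/Real.log 2 + ((d:ℝ)/α + 1)) * Lg ≤ Ax * (1+ρ) * Lg := by
          apply mul_le_mul_of_nonneg_right _ hLg0.le
          have h6 : Ax ≤ Ax * (1+ρ) := le_mul_of_one_le_right hAx.le (by linarith)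
          linarith
        rw [hlogdiv]
        linarith only [hux, hly, habs1, hcoef, e2, e4]
      · -- far regime
        have hlb := (hT2 t ht y z hcase).1
        have htρ : (0:ℝ) < t/ρ := div_pos ht0 hρ0
        have hly : Real.log c₅ + (c₆*ρ) * Real.log (t/ρ) ≤ Real.log (p t y z) := by
          have := Real.log_le_log (mul_pos hc₅ (Real.rpow_pos_of_pos htρ _)) hlb
          rw [Real.log_mul (ne_of_gt hc₅) (ne_of_gt (Real.rpow_pos_of_pos htρ _)),
            Real.log_rpow htρ] at this
          linarith
        have hltρ : Real.log (t/ρ) = - Real.log (ρ/t) := by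
          rw [Real.log_div (ne_of_gt ht0) (ne_of_gt hρ0),
            Real.log_div (ne_of_gt hρ0) (ne_of_gt ht0)]
          ring
        have hlρt : Real.log (ρ/t) ≤ Lg := by
          apply Real.log_le_log (div_pos hρ0 ht0)
          gcongr
          linarith
        have habs1 : Real.log c₇ - Real.log c₅ ≤ |Real.log (c₇/c₅)| := by
          rw [← Real.log_div (ne_of_gt hc₇) (ne_of_gt hc₅)]
          exact le_abs_self _
        have hcoef : |Real.log (c₇/c₅)| ≤ (|Real.log (c₇/c₅)|/Real.log 2) * Lg := by
          rw [div_mul_eq_mul_div, le_div_iff₀ hlog2]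
          exact mul_le_mul_of_nonneg_left hLg2 (abs_nonneg _)
        have e2 : ((d:ℝ)/α) * (-Real.log t) ≤ ((d:ℝ)/α) * Lg :=
          mul_le_mul_of_nonneg_left hnlogt hd0
        have e3 : (c₆*ρ) * Real.log (ρ/t) ≤ (c₆*ρ) * Lg :=
          mul_le_mul_of_nonneg_left hlρt (by positivity)
        have h5 : |Real.log (c₇/c₅)|/Real.log 2 + (d:ℝ)/α ≤ Ax := by
          rw [hAxdef, add_div]
          have h6 : 0 ≤ |Real.log (c₇/c₂)|/Real.log 2 := div_nonneg (abs_nonneg _) hlog2.le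
          linarith
        have h6 : c₆ ≤ Ax := by
          rw [hAxdef, add_div]
          have h7 : 0 ≤ |Real.log (c₇/c₂)|/Real.log 2 := div_nonneg (abs_nonneg _) hlog2.le
          have h8 : 0 ≤ |Real.log (c₇/c₅)|/Real.log 2 := div_nonneg (abs_nonneg _) hlog2.le
          linarith
        have e5 : (|Real.log (c₇/c₅)|/Real.log 2 + (d:ℝ)/α + c₆*ρ) * Lg ≤ Ax * (1+ρ) * Lg := by
          apply mul_le_mul_of_nonneg_right _ hLg0.le
          have h9 : 0 ≤ (Ax - c₆) * ρ := mul_nonneg (sub_nonneg.mpr h6) hρ0.le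
          have h10 : Ax * (1+ρ) = Ax + c₆*ρ + (Ax - c₆)*ρ := by ring
          linarith only [h5, h9, h10]
        have e1 : (c₆*ρ) * Real.log (t/ρ) = -((c₆*ρ) * Real.log (ρ/t)) := by
          rw [hltρ]; ring
        rw [hlogdiv]
        linarith only [hux, hly, habs1, hcoef, e2, e3, e5, e1]
  -- pointwise combined bound
  have hcomb : ∀ t ∈ Set.Ioc (0:ℝ) 1, ∀ x y z : EuclideanSpace ℝ (Fin d), z ≠ y →
      Real.log (p t x z / p t y z) * p t x z ≤
        (A' * (1+‖x - y‖) * Real.log ((2+‖x - y‖)/t)) * (((1+‖x - z‖)^2) * p t x z) := by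
    intro t ht x y z hz
    have key := hlog t ht x y z hz
    have ht0 : (0:ℝ) < t := ht.1
    set r := ‖x - y‖ with hrdef
    set s := ‖x - z‖ with hsdef
    set ρ := ‖y - z‖ with hρdef
    have hr0 : (0:ℝ) ≤ r := norm_nonneg _
    have hs0 : (0:ℝ) ≤ s := norm_nonneg _
    have hρ0 : (0:ℝ) ≤ ρ := norm_nonneg _
    have hρrs : ρ ≤ r + s := by
      rw [hρdef, hrdef, hsdef, norm_sub_rev x y]
      exact norm_sub_le_norm_sub_add_norm_sub y x z
    set Lgr := Real.log ((2+r)/t) with hLgrdef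
    set Lgρ := Real.log ((2+ρ)/t) with hLgρdef
    have hLgr2 : Real.log 2 ≤ Lgr := by
      rw [hLgrdef]
      apply Real.log_le_log two_pos
      rw [le_div_iff₀ ht0]
      linarith only [ht.2, hr0]
    have hLgr0 : (0:ℝ) < Lgr := lt_of_lt_of_le hlog2 hLgr2
    have hLgρ0 : (0:ℝ) ≤ Lgρ := by
      rw [hLgρdef]
      apply Real.log_nonneg
      rw [le_div_iff₀ ht0]
      linarith only [ht.2, hρ0]
    have hLgρle : Lgρ ≤ Lgr + Real.log (1+s) := by
      have hmul : (2+ρ)/t ≤ ((2+r)/t) * (1+s) := by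
        rw [div_mul_eq_mul_div]
        gcongr
        have : 0 ≤ r*s := mul_nonneg hr0 hs0
        linarith only [this, hρrs, hr0, hs0]
      calc Lgρ ≤ Real.log (((2+r)/t) * (1+s)) := Real.log_le_log (by positivity) hmul
        _ = Lgr + Real.log (1+s) := by
            rw [Real.log_mul (by positivity) (by positivity)]
    have hlog1s : Real.log (1+s) ≤ s := by
      have := Real.add_one_le_exp s
      calc Real.log (1+s) ≤ Real.log (Real.exp s) := by
            apply Real.log_le_log (by positivity)
            linarith
        _ = s := Real.log_exp s
    have hlog1s0 : (0:ℝ) ≤ Real.log (1+s) := Real.log_nonneg (by linarith)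
    have hstep1 : (1+ρ) * Lgρ ≤ ((1+r)*(1+s)) * (Lgr + Real.log (1+s)) := by
      have h1 : (1+ρ) ≤ (1+r)*(1+s) := by
        have : 0 ≤ r*s := mul_nonneg hr0 hs0
        nlinarith [this, hρrs]
      exact mul_le_mul h1 hLgρle hLgρ0 (by positivity)
    have hstep2 : (1+s) * (Lgr + Real.log (1+s)) ≤ (1 + 1/Real.log 2) * (Lgr * (1+s)^2) := by
      have key2 : Real.log 2 * ((1+s) * (Lgr + Real.log (1+s))) ≤
          (Real.log 2 + 1) * (Lgr * (1+s)^2) := by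
        have u1 : (1+s) ≤ (1+s)^2 := by nlinarith [hs0]
        have e1 : Real.log 2 * ((1+s)*Lgr) ≤ Real.log 2 * ((1+s)^2*Lgr) :=
          mul_le_mul_of_nonneg_left (mul_le_mul_of_nonneg_right u1 hLgr0.le) hlog2.le
        have e2 : Real.log 2 * ((1+s)*Real.log (1+s)) ≤ Real.log 2 * ((1+s)*(1+s)) :=
          mul_le_mul_of_nonneg_left (mul_le_mul_of_nonneg_left
            (by linarith only [hlog1s, hs0] : Real.log (1+s) ≤ 1+s)
            (by linarith only [hs0] : (0:ℝ) ≤ 1+s)) hlog2.le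
        have e3 : Real.log 2 * ((1+s)*(1+s)) ≤ Lgr * (1+s)^2 := by
          rw [show ((1:ℝ)+s)*(1+s) = (1+s)^2 by ring]
          exact mul_le_mul_of_nonneg_right hLgr2 (by positivity)
        linarith only [e1, le_trans e2 e3]
      rw [show (1 + 1/Real.log 2) * (Lgr*(1+s)^2) =
        ((Real.log 2 + 1) * (Lgr*(1+s)^2))/Real.log 2 by field_simp]
      rw [le_div_iff₀ hlog2]
      linarith
    have m2 : Ax*(1+ρ)*Lgρ ≤ A'*(1+r)*Lgr*(1+s)^2 := by
      calc Ax*(1+ρ)*Lgρ = Ax * ((1+ρ)*Lgρ) := by ring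
        _ ≤ Ax * (((1+r)*(1+s))*(Lgr + Real.log (1+s))) :=
            mul_le_mul_of_nonneg_left hstep1 hAx.le
        _ = (Ax * (1+r)) * ((1+s)*(Lgr + Real.log (1+s))) := by ring
        _ ≤ (Ax * (1+r)) * ((1 + 1/Real.log 2) * (Lgr*(1+s)^2)) := by
            apply mul_le_mul_of_nonneg_left hstep2
            exact mul_nonneg hAx.le (by linarith)
        _ = A'*(1+r)*Lgr*(1+s)^2 := by rw [hA'def]; ring
    calc Real.log (p t x z / p t y z) * p t x z
        ≤ (Ax*(1+ρ)*Lgρ) * p t x z := mul_le_mul_of_nonneg_right key (hp0 t ht x z)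
      _ ≤ (A'*(1+r)*Lgr*(1+s)^2) * p t x z := mul_le_mul_of_nonneg_right m2 (hp0 t ht x z)
      _ = (A' * (1+r) * Lgr) * (((1+s)^2) * p t x z) := by ring
  refine ⟨A' * K, mul_pos hA' hK, ?_⟩
  intro t ht x y
  have hr0 : (0:ℝ) ≤ ‖x - y‖ := norm_nonneg _
  have hLgr : Real.log 2 ≤ Real.log ((2+‖x - y‖)/t) := by
    apply Real.log_le_log two_pos
    rw [le_div_iff₀ ht.1]
    nlinarith [ht.2]
  have hLgr0 : 0 < Real.log ((2+‖x - y‖)/t) := lt_of_lt_of_le hlog2 hLgr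
  have hRHSpos : 0 < A' * K * (1 + ‖x - y‖) * Real.log ((2 + ‖x - y‖) / t) :=
    mul_pos (mul_pos (mul_pos hA' hK) (by linarith)) hLgr0
  by_cases hfi : Integrable (fun z => Real.log (p t x z / p t y z) * p t x z)
  · have hsing : (volume : Measure (EuclideanSpace ℝ (Fin d))) {y} = 0 := by
      haveI : Nontrivial (EuclideanSpace ℝ (Fin d)) := by
        have : 0 < Module.finrank ℝ (EuclideanSpace ℝ (Fin d)) := by
          rw [finrank_euclideanSpace_fin]; exact_mod_cast hd
        exact Module.nontrivial_of_finrank_pos this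
      exact measure_singleton y
    have hae : ∀ᵐ z : EuclideanSpace ℝ (Fin d), Real.log (p t x z / p t y z) * p t x z ≤
        (A' * (1+‖x - y‖) * Real.log ((2+‖x - y‖)/t)) * (((1+‖x - z‖)^2) * p t x z) := by
      filter_upwards [compl_mem_ae_iff.2 hsing] with z hz
      exact hcomb t ht x y z hz
    have h2 : Integrable (fun z => (A' * (1+‖x - y‖) * Real.log ((2+‖x - y‖)/t)) *
        (((1+‖x - z‖)^2) * p t x z)) := (hmom_int t ht x).const_mul _
    calc ∫ z, Real.log (p t x z / p t y z) * p t x z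
        ≤ ∫ z, (A' * (1+‖x - y‖) * Real.log ((2+‖x - y‖)/t)) * (((1+‖x - z‖)^2) * p t x z) :=
          integral_mono_ae hfi h2 hae
      _ = (A' * (1+‖x - y‖) * Real.log ((2+‖x - y‖)/t)) * ∫ z, ((1+‖x - z‖)^2) * p t x z :=
          integral_const_mul _ _
      _ ≤ (A' * (1+‖x - y‖) * Real.log ((2+‖x - y‖)/t)) * K := by
          apply mul_le_mul_of_nonneg_left (hmom t ht x)
          have h1 : (0:ℝ) ≤ 1 + ‖x - y‖ := by linarith
          exact mul_nonneg (mul_nonneg hA'.le h1) hLgr0.le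
      _ = A' * K * (1 + ‖x - y‖) * Real.log ((2 + ‖x - y‖) / t) := by ring
  · rw [integral_undef hfi]
    exact hRHSpos.le
end
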